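/- arXiv:2008.07293 — 3 statements merged into one kernel-verified Lean document; each statement's English description precedes it below -/
import Mathlib

section
/- Let p > 0. Set c_i = 60 for 1 ≤ i ≤ 25 and c_i = 20 for 26 ≤ i ≤ 100, and let M₂ be the 100×100 real matrix with (M₂)_{ii} = (c_i−1)p and (M₂)_{ij} = (2c_j/(3000−c_i))·(c_j−1)·p for i ≠ j. Then M₂ has a real eigenvalue λ with λ > 1.48·(87p). In particular, the basic reproduction number of Scenario 2 exceeds the basic reproduction number 87p of Scenario 1 by more than 48%. -/
open Matrix

lemma sum_helper100 (i : Fin 100) (f : Fin 100 → ℝ) (A B C : ℝ)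
    (h : ∀ j, f j = (if (j:ℕ) < 25 then A else B) + (if j = i then C else 0)) :
    ∑ j, f j = 25*A + 75*B + C := by
  have h1 : ∑ j : Fin 100, (if (j:ℕ) < 25 then A else B) = 25*A + 75*B := by
    rw [Finset.sum_ite, Finset.sum_const, Finset.sum_const]
    have e1 : (Finset.filter (fun j : Fin 100 => (j:ℕ) < 25) Finset.univ).card = 25 := by decide
    have e2 : (Finset.filter (fun j : Fin 100 => ¬ (j:ℕ) < 25) Finset.univ).card = 75 := by decide
    rw [e1, e2]; ring
  have h2 : ∑ j : Fin 100, (if j = i then C else 0) = C := by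
    simp [Finset.sum_ite_eq']
  calc ∑ j, f j
      = ∑ j : Fin 100, ((if (j:ℕ) < 25 then A else B) + (if j = i then C else 0)) :=
        Finset.sum_congr rfl (fun j _ => h j)
    _ = 25*A + 75*B + C := by rw [Finset.sum_add_distrib, h1, h2]

/-- Scenario 2's next-generation matrix `M₂` has a real eigenvalue exceeding `1.48·(87p)`,
i.e. its basic reproduction number exceeds Scenario 1's `R₀ = 87p` by more than 48%. -/
theorem scenario2_R0_exceeds_scenario1 (p : ℝ) (hp : 0 < p)
    (c : Fin 100 → ℝ) (hc : ∀ i, c i = if (i : ℕ) < 25 then 60 else 20)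
    (M₂ : Matrix (Fin 100) (Fin 100) ℝ)
    (hM₂ : ∀ i j, M₂ i j =
      if i = j then (c i - 1) * p else (2 * c j / (3000 - c i)) * (c j - 1) * p) :
    ∃ lam : ℝ, lam ∈ spectrum ℝ M₂ ∧ lam > 1.48 * (87 * p) := by
  set s : ℝ := Real.sqrt (577562118400/53304601) with hs_def
  have hD : (0:ℝ) ≤ 577562118400/53304601 := by norm_num
  have hs2 : s^2 = 577562118400/53304601 := Real.sq_sqrt hD
  set μ : ℝ := (1129234/7301 + s)/2 with hμ
  set a : ℝ := 950/49 with ha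
  set b : ℝ := μ - 5723/49 with hb
  set x : Fin 100 → ℝ := fun j => if (j:ℕ) < 25 then a else b with hx
  have hxne : x ≠ 0 := by
    intro h
    have h0 : x ⟨0, by norm_num⟩ = 0 := by rw [h]; rfl
    rw [hx] at h0
    norm_num [ha] at h0
  have key : M₂ *ᵥ x = (p*μ) • x := by
    funext i
    show ∑ j, M₂ i j * x j = (p*μ) * x i
    by_cases hi : (i:ℕ) < 25
    · rw [sum_helper100 i _ ((2*60/2940)*59*p*a) ((2*20/2940)*19*p*b)
        (59*p*a - (2*60/2940)*59*p*a) ?_]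
      · have : x i = a := by rw [hx]; simp [hi]
        rw [this, ha, hb]; ring
      · intro j
        by_cases hj : j = i
        · subst hj
          have hj25 : (j:ℕ) < 25 := hi
          simp only [hM₂, hx, hc, if_pos rfl, if_pos hj25, if_true, eq_self_iff_true]
          ring
        · have hij : ¬ i = j := fun h => hj h.symm
          by_cases hj25 : (j:ℕ) < 25
          · simp only [hM₂, hx, hc, if_neg hij, if_pos hj25, if_pos hi, if_neg hj]
            ring
          · simp only [hM₂, hx, hc, if_neg hij, if_neg hj25, if_pos hi, if_neg hj]
            ring
    · rw [sum_helper100 i _ ((2*60/2980)*59*p*a) ((2*20/2980)*19*p*b)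
        (19*p*b - (2*20/2980)*19*p*b) ?_]
      · have : x i = b := by rw [hx]; simp [hi]
        rw [this, ha, hb, hμ]
        linear_combination (-(p/4)) * hs2
      · intro j
        by_cases hj : j = i
        · subst hj
          have hj25 : ¬ (j:ℕ) < 25 := hi
          simp only [hM₂, hx, hc, if_pos rfl, if_neg hj25, if_true, eq_self_iff_true]
          ring
        · have hij : ¬ i = j := fun h => hj h.symm
          by_cases hj25 : (j:ℕ) < 25
          · simp only [hM₂, hx, hc, if_neg hij, if_pos hj25, if_neg hi, if_neg hj]
            ring
          · simp only [hM₂, hx, hc, if_neg hij, if_neg hj25, if_neg hi, if_neg hj]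
            ring
  refine ⟨p*μ, ?_, ?_⟩
  · rw [spectrum.mem_iff]
    intro hu
    have h0 : (algebraMap ℝ (Matrix (Fin 100) (Fin 100) ℝ) (p*μ) - M₂) *ᵥ x = 0 := by
      rw [Matrix.sub_mulVec, key, Algebra.algebraMap_eq_smul_one,
        Matrix.smul_mulVec, Matrix.one_mulVec, sub_self]
    apply hxne
    have := hu.unit.inv_mul
    calc x = 1 *ᵥ x := (Matrix.one_mulVec x).symm
      _ = (↑hu.unit⁻¹ * ↑hu.unit) *ᵥ x := by rw [this]
      _ = ↑hu.unit⁻¹ *ᵥ ((algebraMap ℝ (Matrix (Fin 100) (Fin 100) ℝ) (p*μ) - M₂) *ᵥ x) := by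
          rw [← Matrix.mulVec_mulVec, hu.unit_spec]
      _ = 0 := by rw [h0, Matrix.mulVec_zero]
  · have hsgt : (750919.52/7301 : ℝ) < s := by
      rw [hs_def]
      rw [show (750919.52/7301 : ℝ) = Real.sqrt ((750919.52/7301)^2) from
        (Real.sqrt_sq (by norm_num)).symm]
      apply Real.sqrt_lt_sqrt (by positivity)
      norm_num
    rw [hμ]
    nlinarith [hp, hsgt, mul_pos hp (show (0:ℝ) < s - 750919.52/7301 by linarith)]
end

section
/- Let p > 0. Set c_i = 60 for 1 ≤ i ≤ 25 and c_i = 20 for 26 ≤ i ≤ 100, and let M₂ be the 100×100 real matrix with (M₂)_{ii} = (c_i−1)p and (M₂)_{ij} = (2c_j/(3000−c_i))·(c_j−1)·p for i ≠ j. Then every eigenvalue μ of M₂ satisfies |μ| ≤ λ_max, where λ_max is the largest eigenvalue of the 2×2 matrix B = p·[[59 + 24·59·120/2940, 75·19·40/2940], [25·59·120/2980, 19 + 74·19·40/2980]]; that is, the spectral radius of M₂ equals the largest eigenvalue of B. -/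
/-!
`M₂` is a diagonal matrix plus a matrix that is constant on blocks:
`M₂ = diagonal (δ ∘ g) + K.submatrix g g`, where `g` sends a class to its size group.
If `M₂ v = μ v`, the group sums `S` of `v` satisfy `(μ - δ a) S a = n a (K S) a`. Either `S = 0`,
and then `μ` is one of the `δ a`, or the group averages of `v` form an eigenvector of the quotient
matrix `B = diagonal δ + K * diagonal n`; conversely, eigenvectors of `B` lift to group-constant
eigenvectors of `M₂`. As `B` is a nonnegative `2 × 2` matrix, its eigenvalues `(tr B ± √disc B) / 2`
are real and the larger one dominates the other in absolute value, as well as the diagonal entries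
`B a a ≥ δ a ≥ 0`. So it is the largest modulus of an eigenvalue of `M₂`.
-/

open Matrix Finset

namespace Matrix

variable {𝕜 n : Type*} [Field 𝕜] [Fintype n] [DecidableEq n]

theorem mem_spectrum_iff_exists_mulVec_eq_smul {A : Matrix n n 𝕜} {μ : 𝕜} :
    μ ∈ spectrum 𝕜 A ↔ ∃ v ≠ 0, A *ᵥ v = μ • v := by
  rw [spectrum.mem_iff, isUnit_iff_isUnit_det, isUnit_iff_ne_zero, not_ne_iff,
    ← exists_mulVec_eq_zero_iff]
  simp only [Algebra.algebraMap_eq_smul_one, sub_mulVec, smul_mulVec, one_mulVec, sub_eq_zero,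
    eq_comm (a := μ • _)]

end Matrix

theorem map_diagonal_add_submatrix {ι κ R S : Type*} [DecidableEq ι] [NonAssocSemiring R]
    [NonAssocSemiring S] (g : ι → κ) (δ : κ → R) (K : Matrix κ κ R) (f : R →+* S) :
    (diagonal (δ ∘ g) + K.submatrix g g).map f =
      diagonal ((f ∘ δ) ∘ g) + (K.map f).submatrix g g := by
  rw [Matrix.map_add f (map_add f), diagonal_map (map_zero f), submatrix_map]
  rfl

section Blocks

variable {ι κ 𝕜 : Type*} [Fintype ι] [DecidableEq κ] [Field 𝕜]

def blockSum (g : ι → κ) (v : ι → 𝕜) (b : κ) : 𝕜 := ∑ j with g j = b, v j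

theorem blockSum_comp (g : ι → κ) (w : κ → 𝕜) (b : κ) :
    blockSum g (w ∘ g) b = #{j | g j = b} * w b := by
  rw [blockSum, sum_congr rfl fun j hj ↦ by rw [Function.comp_apply, (mem_filter.mp hj).2],
    sum_const, nsmul_eq_mul]

variable [Fintype κ]

/-- For `M = diagonal (δ ∘ g) + K.submatrix g g`, the matrix of `M` on vectors constant on the
fibres of `g` (the reduced matrix `B` of the paper). -/
def blockQuotient (g : ι → κ) (δ : κ → 𝕜) (K : Matrix κ κ 𝕜) : Matrix κ κ 𝕜 :=
  diagonal δ + K * diagonal fun b ↦ (#{j | g j = b} : 𝕜)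

variable (g : ι → κ) (δ : κ → 𝕜) (K : Matrix κ κ 𝕜)

theorem submatrix_mulVec_apply (v : ι → 𝕜) (i : ι) :
    (K.submatrix g g *ᵥ v) i = (K *ᵥ blockSum g v) (g i) := by
  simp only [mulVec, dotProduct, submatrix_apply, blockSum, mul_sum]
  rw [← sum_fiberwise univ g]
  exact sum_congr rfl fun b _ ↦ sum_congr rfl fun j hj ↦ by rw [(mem_filter.mp hj).2]

theorem blockQuotient_apply_self (a : κ) :
    blockQuotient g δ K a a = δ a + K a a * #{j | g j = a} := by
  simp [blockQuotient]

theorem blockQuotient_map {𝕜' : Type*} [Field 𝕜'] (f : 𝕜 →+* 𝕜') :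
    (blockQuotient g δ K).map f = blockQuotient g (f ∘ δ) (K.map f) := by
  simp [blockQuotient, Matrix.map_add, Matrix.map_mul, diagonal_map]

theorem blockQuotient_mulVec (w : κ → 𝕜) :
    blockQuotient g δ K *ᵥ w = δ * w + K *ᵥ fun b ↦ #{j | g j = b} * w b := by
  ext a
  simp only [blockQuotient, add_mulVec, ← mulVec_mulVec, Pi.add_apply, mulVec_diagonal,
    Pi.mul_apply]
  congr 2
  ext b
  exact mulVec_diagonal (fun b ↦ (#{j | g j = b} : 𝕜)) w b

variable [DecidableEq ι]

theorem mulVec_comp_eq_comp_blockQuotient_mulVec (w : κ → 𝕜) :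
    (diagonal (δ ∘ g) + K.submatrix g g) *ᵥ (w ∘ g) = (blockQuotient g δ K *ᵥ w) ∘ g := by
  ext i
  simp [blockQuotient_mulVec, add_mulVec, submatrix_mulVec_apply, funext (blockSum_comp g w),
    mulVec_diagonal]

variable {g δ K}

theorem mem_spectrum_of_mem_spectrum_blockQuotient (hg : g.Surjective) {μ : 𝕜}
    (h : μ ∈ spectrum 𝕜 (blockQuotient g δ K)) :
    μ ∈ spectrum 𝕜 (diagonal (δ ∘ g) + K.submatrix g g) := by
  obtain ⟨w, hw0, hw⟩ := mem_spectrum_iff_exists_mulVec_eq_smul.mp h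
  refine mem_spectrum_iff_exists_mulVec_eq_smul.mpr ⟨w ∘ g, ?_, ?_⟩
  · exact fun h0 ↦ hw0 (hg.injective_comp_right h0)
  · rw [mulVec_comp_eq_comp_blockQuotient_mulVec, hw]
    rfl

theorem mem_range_or_mem_spectrum_blockQuotient [CharZero 𝕜] (hg : g.Surjective) {μ : 𝕜}
    (h : μ ∈ spectrum 𝕜 (diagonal (δ ∘ g) + K.submatrix g g)) :
    μ ∈ Set.range δ ∨ μ ∈ spectrum 𝕜 (blockQuotient g δ K) := by
  obtain ⟨v, hv0, hv⟩ := mem_spectrum_iff_exists_mulVec_eq_smul.mp h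
  set S := blockSum g v with hS_def
  have hrow (i : ι) : (μ - δ (g i)) * v i = (K *ᵥ S) (g i) := by
    have := congrFun hv i
    simp only [add_mulVec, Pi.add_apply, mulVec_diagonal, submatrix_mulVec_apply,
      Pi.smul_apply, smul_eq_mul, Function.comp_apply] at this
    linear_combination -this
  by_cases hS : S = 0
  · obtain ⟨i, hi⟩ := Function.ne_iff.mp hv0
    have := hrow i
    rw [hS, mulVec_zero, Pi.zero_apply, mul_eq_zero, sub_eq_zero] at this
    exact Or.inl ⟨g i, (this.resolve_right hi).symm⟩
  have hn (b : κ) : (#{j | g j = b} : 𝕜) ≠ 0 := by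
    obtain ⟨j, rfl⟩ := hg b
    exact Nat.cast_ne_zero.mpr (card_pos.mpr ⟨j, by simp⟩).ne'
  have hblock (a : κ) : (μ - δ a) * S a = #{j | g j = a} * (K *ᵥ S) a := by
    rw [hS_def, blockSum, mul_sum, ← nsmul_eq_mul, ← sum_const]
    exact sum_congr rfl fun i hi ↦ by rw [← (mem_filter.mp hi).2, hrow]
  have hSw : (fun b ↦ #{j | g j = b} * (S b / #{j | g j = b})) = S :=
    funext fun b ↦ mul_div_cancel₀ _ (hn b)
  refine Or.inr (mem_spectrum_iff_exists_mulVec_eq_smul.mpr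
    ⟨fun b ↦ S b / #{j | g j = b}, fun h0 ↦ hS ?_, ?_⟩)
  · funext b
    simpa [hn b] using congrFun h0 b
  · ext a
    rw [blockQuotient_mulVec, hSw]
    have hKS : (K *ᵥ S) a = (μ - δ a) * (S a / #{j | g j = a}) := by
      rw [mul_div_assoc', eq_div_iff (hn a), hblock a, mul_comm]
    simp only [Pi.add_apply, Pi.mul_apply, Pi.smul_apply, smul_eq_mul, hKS]
    ring

end Blocks

theorem blockQuotient_nonneg {ι κ 𝕜 : Type*} [Fintype ι] [Fintype κ] [DecidableEq κ] [Field 𝕜]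
    [LinearOrder 𝕜] [IsStrictOrderedRing 𝕜] {g : ι → κ} {δ : κ → 𝕜} {K : Matrix κ κ 𝕜}
    (hδ : ∀ a, 0 ≤ δ a) (hK : ∀ a b, 0 ≤ K a b) (a b : κ) : 0 ≤ blockQuotient g δ K a b := by
  rw [blockQuotient, Matrix.add_apply, mul_diagonal, diagonal_apply]
  have := hδ a
  have := hK a b
  split_ifs <;> positivity

open Polynomial in
theorem Matrix.mem_spectrum_fin_two_iff {𝕜 : Type*} [Field 𝕜] [NeZero (2 : 𝕜)]
    (A : Matrix (Fin 2) (Fin 2) 𝕜) {s : 𝕜} (hs : A.discr = s * s) {μ : 𝕜} :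
    μ ∈ spectrum 𝕜 A ↔ μ = (A.trace + s) / 2 ∨ μ = (A.trace - s) / 2 := by
  have hs' : discrim 1 (-A.trace) A.det = s * s := by rw [discrim, ← hs, discr_fin_two]; ring
  rw [mem_spectrum_iff_isRoot_charpoly, charpoly_fin_two, IsRoot.def]
  simpa [sq, sub_eq_add_neg] using quadratic_eq_zero_iff one_ne_zero hs' μ

theorem Matrix.discr_fin_two_eq {R : Type*} [CommRing R] (A : Matrix (Fin 2) (Fin 2) R) :
    A.discr = (A 0 0 - A 1 1) ^ 2 + 4 * A 0 1 * A 1 0 := by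
  rw [discr_fin_two, trace_fin_two, det_fin_two]
  ring

section PerronRoot

variable {A : Matrix (Fin 2) (Fin 2) ℝ}

noncomputable def perronRoot (A : Matrix (Fin 2) (Fin 2) ℝ) : ℝ := (A.trace + √A.discr) / 2

theorem discr_nonneg_of_nonneg (hA : ∀ i j, 0 ≤ A i j) : 0 ≤ A.discr := by
  rw [discr_fin_two_eq]
  have := hA 0 1
  have := hA 1 0
  positivity

theorem perronRoot_nonneg (hA : ∀ i j, 0 ≤ A i j) : 0 ≤ perronRoot A := by
  rw [perronRoot, trace_fin_two]
  have := hA 0 0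
  have := hA 1 1
  positivity

theorem mem_spectrum_iff_of_nonneg (hA : ∀ i j, 0 ≤ A i j) {μ : ℝ} :
    μ ∈ spectrum ℝ A ↔ μ = perronRoot A ∨ μ = (A.trace - √A.discr) / 2 :=
  mem_spectrum_fin_two_iff A (Real.mul_self_sqrt (discr_nonneg_of_nonneg hA)).symm

theorem mem_spectrum_map_ofReal_iff_of_nonneg (hA : ∀ i j, 0 ≤ A i j) {μ : ℂ} :
    μ ∈ spectrum ℂ (A.map ((↑) : ℝ → ℂ)) ↔
      μ = perronRoot A ∨ μ = ((A.trace - √A.discr) / 2 : ℝ) := by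
  have hs : (A.map ((↑) : ℝ → ℂ)).discr = (√A.discr : ℂ) * √A.discr := by
    rw [← Complex.ofReal_mul, Real.mul_self_sqrt (discr_nonneg_of_nonneg hA), discr_fin_two_eq,
      discr_fin_two_eq]
    simp
  rw [mem_spectrum_fin_two_iff _ hs, perronRoot]
  simp [trace_fin_two]

theorem perronRoot_mem_spectrum (hA : ∀ i j, 0 ≤ A i j) : perronRoot A ∈ spectrum ℝ A :=
  (mem_spectrum_iff_of_nonneg hA).mpr (Or.inl rfl)

theorem le_perronRoot_of_mem_spectrum (hA : ∀ i j, 0 ≤ A i j) {μ : ℝ}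
    (hμ : μ ∈ spectrum ℝ A) : μ ≤ perronRoot A := by
  rcases (mem_spectrum_iff_of_nonneg hA).mp hμ with rfl | rfl
  · rfl
  · rw [perronRoot]
    linarith [Real.sqrt_nonneg A.discr]

theorem ofReal_perronRoot_mem_spectrum_map (hA : ∀ i j, 0 ≤ A i j) :
    (perronRoot A : ℂ) ∈ spectrum ℂ (A.map ((↑) : ℝ → ℂ)) :=
  (mem_spectrum_map_ofReal_iff_of_nonneg hA).mpr (Or.inl rfl)

theorem norm_le_perronRoot_of_mem_spectrum_map (hA : ∀ i j, 0 ≤ A i j) {μ : ℂ}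
    (hμ : μ ∈ spectrum ℂ (A.map ((↑) : ℝ → ℂ))) : ‖μ‖ ≤ perronRoot A := by
  have htr : 0 ≤ A.trace := by rw [trace_fin_two]; linarith [hA 0 0, hA 1 1]
  have hs := Real.sqrt_nonneg A.discr
  rcases (mem_spectrum_map_ofReal_iff_of_nonneg hA).mp hμ with rfl | rfl
  · rw [Complex.norm_real, Real.norm_of_nonneg (perronRoot_nonneg hA)]
  · rw [Complex.norm_real, Real.norm_eq_abs, abs_le, perronRoot]
    constructor <;> linarith

theorem apply_self_le_perronRoot (hA : ∀ i j, 0 ≤ A i j) (i : Fin 2) : A i i ≤ perronRoot A := by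
  have hs : |A 0 0 - A 1 1| ≤ √A.discr := by
    rw [← Real.sqrt_sq_eq_abs]
    refine Real.sqrt_le_sqrt ?_
    rw [discr_fin_two_eq]
    nlinarith [hA 0 1, hA 1 0]
  rw [perronRoot, trace_fin_two]
  fin_cases i <;> simp <;> linarith [le_abs_self (A 0 0 - A 1 1), neg_abs_le (A 0 0 - A 1 1)]

end PerronRoot

theorem spectralRadius_eq_ofReal_of_isGreatest {𝕜 A : Type*} [NormedField 𝕜] [Ring A]
    [Algebra 𝕜 A] {a : A} {r : ℝ} (h : IsGreatest ((‖·‖) '' spectrum 𝕜 a) r) :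
    spectralRadius 𝕜 a = ENNReal.ofReal r := by
  obtain ⟨⟨k, hk, rfl⟩, hub⟩ := h
  refine le_antisymm (iSup₂_le fun μ hμ ↦ ?_) (le_iSup₂_of_le k hk ?_)
  · rw [← enorm_eq_nnnorm, ← ofReal_norm]
    exact ENNReal.ofReal_le_ofReal (hub ⟨μ, hμ, rfl⟩)
  · rw [← enorm_eq_nnnorm, ← ofReal_norm]

theorem isGreatest_norm_spectrum_diagonal_add_submatrix {ι : Type*} [Fintype ι] [DecidableEq ι]
    {g : ι → Fin 2} {δ : Fin 2 → ℝ} {K : Matrix (Fin 2) (Fin 2) ℝ} (hg : g.Surjective)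
    (hδ : ∀ a, 0 ≤ δ a) (hK : ∀ a b, 0 ≤ K a b) :
    IsGreatest ((‖·‖) '' spectrum ℂ ((diagonal (δ ∘ g) + K.submatrix g g).map ((↑) : ℝ → ℂ)))
      (perronRoot (blockQuotient g δ K)) := by
  have hQ := blockQuotient_nonneg hδ hK (g := g)
  have hM : (diagonal (δ ∘ g) + K.submatrix g g).map ((↑) : ℝ → ℂ) =
      diagonal ((((↑) : ℝ → ℂ) ∘ δ) ∘ g) + (K.map (↑)).submatrix g g :=
    map_diagonal_add_submatrix g δ K Complex.ofRealHom
  have hQC : blockQuotient g (((↑) : ℝ → ℂ) ∘ δ) (K.map (↑)) = (blockQuotient g δ K).map (↑) :=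
    (blockQuotient_map g δ K Complex.ofRealHom).symm
  refine ⟨⟨_, ?_, (Complex.norm_real _).trans (Real.norm_of_nonneg (perronRoot_nonneg hQ))⟩, ?_⟩
  · rw [hM]
    exact mem_spectrum_of_mem_spectrum_blockQuotient hg
      (hQC ▸ ofReal_perronRoot_mem_spectrum_map hQ)
  · rintro _ ⟨μ, hμ, rfl⟩
    rw [hM] at hμ
    rcases mem_range_or_mem_spectrum_blockQuotient hg hμ with ⟨a, rfl⟩ | hμ
    · have hδQ : δ a ≤ blockQuotient g δ K a a := by
        rw [blockQuotient_apply_self]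
        exact le_add_of_nonneg_right (mul_nonneg (hK a a) (Nat.cast_nonneg _))
      simpa [abs_of_nonneg (hδ a)] using hδQ.trans (apply_self_le_perronRoot hQ a)
    · exact norm_le_perronRoot_of_mem_spectrum_map hQ (hQC ▸ hμ)

namespace Scenario2

def classOf (i : Fin 100) : Fin 2 := if (i : ℕ) < 25 then 0 else 1

def classSize : Fin 2 → ℝ := ![60, 20]

noncomputable def coupling (p : ℝ) : Matrix (Fin 2) (Fin 2) ℝ :=
  of fun a b ↦ 2 * classSize b / (3000 - classSize a) * (classSize b - 1) * p

/-- `(59 - 120 * 59 / 2940) * p` and `(19 - 40 * 19 / 2980) * p`: the eigenvalues of `M₂` on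
vectors summing to zero within each class. -/
noncomputable def residual (p : ℝ) (a : Fin 2) : ℝ := (classSize a - 1) * p - coupling p a a

theorem classOf_surjective : classOf.Surjective := by decide

theorem coupling_nonneg {p : ℝ} (hp : 0 ≤ p) (a b : Fin 2) : 0 ≤ coupling p a b := by
  fin_cases a <;> fin_cases b <;> norm_num [coupling, classSize] <;> positivity

theorem residual_nonneg {p : ℝ} (hp : 0 ≤ p) (a : Fin 2) : 0 ≤ residual p a := by
  fin_cases a <;> norm_num [residual, coupling, classSize] <;> linarith

theorem eq_diagonal_add_submatrix {p : ℝ} {c : Fin 100 → ℝ}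
    (hc : ∀ i, c i = if (i : ℕ) < 25 then 60 else 20) {M : Matrix (Fin 100) (Fin 100) ℝ}
    (hM : ∀ i j, M i j =
      if i = j then (c i - 1) * p else (2 * c j / (3000 - c i)) * (c j - 1) * p) :
    M = diagonal (residual p ∘ classOf) + (coupling p).submatrix classOf classOf := by
  have hc' (i : Fin 100) : c i = classSize (classOf i) := by
    rw [hc, classOf]
    split_ifs <;> rfl
  ext i j
  rw [hM, hc', hc']
  rcases eq_or_ne i j with rfl | hij
  · simp [residual, coupling]
  · simp [hij, coupling]

theorem blockQuotient_eq (p : ℝ) :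
    blockQuotient classOf (residual p) (coupling p) =
      p • !![59 + 24 * 59 * 120 / 2940, 75 * 19 * 40 / 2940;
             25 * 59 * 120 / 2980, 19 + 74 * 19 * 40 / 2980] := by
  have h0 : #{i | classOf i = 0} = 25 := by decide
  have h1 : #{i | classOf i = 1} = 75 := by decide
  ext a b
  rw [blockQuotient, Matrix.add_apply, mul_diagonal]
  fin_cases a <;> fin_cases b <;> simp [h0, h1, residual, coupling, classSize] <;> ring

end Scenario2

open Scenario2 in
/-- The spectral radius of Scenario 2's `100×100` next-generation matrix `M₂` equals the
largest eigenvalue of the reduced `2×2` matrix `B`: every (complex) eigenvalue `μ` of `M₂`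
satisfies `|μ| ≤ λ_max`. -/
theorem scenario2_spectral_radius (p : ℝ) (hp : 0 < p)
    (c : Fin 100 → ℝ) (hc : ∀ i, c i = if (i : ℕ) < 25 then 60 else 20)
    (M₂ : Matrix (Fin 100) (Fin 100) ℝ)
    (hM₂ : ∀ i j, M₂ i j =
      if i = j then (c i - 1) * p else (2 * c j / (3000 - c i)) * (c j - 1) * p)
    (B : Matrix (Fin 2) (Fin 2) ℝ)
    (hB : B = p • !![59 + 24 * 59 * 120 / 2940, 75 * 19 * 40 / 2940;
                     25 * 59 * 120 / 2980, 19 + 74 * 19 * 40 / 2980]) :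
    ∃ lmax : ℝ, lmax ∈ spectrum ℝ B ∧ (∀ μ ∈ spectrum ℝ B, μ ≤ lmax) ∧
      (∀ μ ∈ spectrum ℂ (M₂.map (fun x : ℝ => (x : ℂ))), ‖μ‖ ≤ lmax) ∧
      spectralRadius ℂ (M₂.map (fun x : ℝ => (x : ℂ))) = ENNReal.ofReal lmax := by
  obtain rfl := eq_diagonal_add_submatrix hc hM₂
  obtain rfl : B = blockQuotient classOf (residual p) (coupling p) :=
    hB.trans (blockQuotient_eq p).symm
  have hB₀ := blockQuotient_nonneg (residual_nonneg hp.le) (coupling_nonneg hp.le) (g := classOf)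
  have hρ := isGreatest_norm_spectrum_diagonal_add_submatrix classOf_surjective
    (residual_nonneg hp.le) (coupling_nonneg hp.le)
  exact ⟨_, perronRoot_mem_spectrum hB₀, fun _ ↦ le_perronRoot_of_mem_spectrum hB₀,
    fun μ hμ ↦ hρ.2 ⟨μ, hμ, rfl⟩, spectralRadius_eq_ofReal_of_isGreatest hρ⟩
end

section
/- Let p > 0. For 1 ≤ i ≤ 111 set c_i = i + 9 (so the class sizes are 10, 11, …, 120 and the total enrollment is c₁ + ⋯ + c₁₁₁ = 7215), and let M be the 111×111 real matrix with M_{ii} = (c_i−1)p and M_{ij} = (2c_j/(7215−c_i))·(c_j−1)·p for i ≠ j. Then the spectral radius ρ of M satisfies 251·p ≤ ρ ≤ 252·p. -/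
/-!
A nonnegative matrix `A` with a positive vector `v` such that `r v ≤ A v ≤ R v` has spectral
radius in `[r, R]` (Collatz–Wielandt): conjugating by `diag v` turns this into bounds on row sums,
the upper one bounds the `ℓ∞` operator norm, and the lower one bounds `‖Aᵏ‖ ≥ rᵏ`, which Gelfand's
formula turns into `r ≤ ρ(A)`.

For the next-generation matrix, solving `M v = λ v` with `λ = 251.5 p` and the normalisation
`∑ c_j (c_j - 1) v_j = 1` forces `v_i = 4 / ((7215 - c_i)(505 - 2 c_i) + 4 c_i (c_i - 1))`
(`perronWeight`). For this `v` the normalisation holds up to `10⁻³`, which moves each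
`(M v)_i / (p v_i)` away from `251.5` by at most `1/2`.
-/

open Matrix

open scoped ENNReal

attribute [local instance] Matrix.linftyOpNormedAddCommGroup Matrix.linftyOpNormedRing
  Matrix.linftyOpNormedAlgebra

namespace Matrix

variable {m n : Type*} [Fintype m] [Fintype n]

lemma linfty_opNNNorm_map_ofReal {B : Matrix m n ℝ} (hB : ∀ i j, 0 ≤ B i j) :
    ‖B.map ((↑) : ℝ → ℂ)‖₊ = Finset.univ.sup fun i => (∑ j, B i j).toNNReal := by
  rw [linfty_opNNNorm_def]
  congr! with i
  rw [Real.toNNReal_sum_of_nonneg fun j _ => hB i j]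
  congr! with j
  rw [map_apply, ← NNReal.coe_inj, coe_nnnorm, Complex.norm_real, Real.norm_of_nonneg (hB i j),
    Real.coe_toNNReal _ (hB i j)]

variable [DecidableEq n]

lemma pow_le_sum_pow_apply {B : Matrix n n ℝ} (hB : ∀ i j, 0 ≤ B i j) {r : ℝ} (hr₀ : 0 ≤ r)
    (hr : ∀ i, r ≤ ∑ j, B i j) (k : ℕ) (i : n) : r ^ k ≤ ∑ j, (B ^ k) i j := by
  induction k generalizing i with
  | zero => simp [one_apply]
  | succ k ih =>
    calc r ^ (k + 1) = r * r ^ k := pow_succ' r k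
      _ ≤ ∑ l, B i l * r ^ k := by
        rw [← Finset.sum_mul]
        exact mul_le_mul_of_nonneg_right (hr i) (by positivity)
      _ ≤ ∑ l, B i l * ∑ j, (B ^ k) l j :=
        Finset.sum_le_sum fun l _ => mul_le_mul_of_nonneg_left (ih l) (hB i l)
      _ = ∑ j, (B ^ (k + 1)) i j := by
        simp only [pow_succ', mul_apply, Finset.mul_sum]
        exact Finset.sum_comm

lemma spectralRadius_diagonal_inv_mul_mul_diagonal {𝕜 : Type*} [NormedField 𝕜] {d : n → 𝕜}
    (hd : ∀ i, d i ≠ 0) (A : Matrix n n 𝕜) :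
    spectralRadius 𝕜 (diagonal d⁻¹ * A * diagonal d) = spectralRadius 𝕜 A := by
  have hinv : d⁻¹ * d = 1 := funext fun i => inv_mul_cancel₀ (hd i)
  have hinv' : d * d⁻¹ = 1 := funext fun i => mul_inv_cancel₀ (hd i)
  let u : (Matrix n n 𝕜)ˣ :=
    ⟨diagonal d⁻¹, diagonal d,
      by rw [diagonal_mul_diagonal, ← Pi.mul_def, hinv]; exact diagonal_one,
      by rw [diagonal_mul_diagonal, ← Pi.mul_def, hinv']; exact diagonal_one⟩
  simp only [spectralRadius]
  rw [show diagonal d⁻¹ * A * diagonal d = u * A * ↑u⁻¹ from rfl, spectrum.units_conjugate]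

lemma diagonal_inv_mul_mul_diagonal_apply {α : Type*} [DivisionRing α] (A : Matrix n n α)
    (v : n → α) (i j : n) : (diagonal v⁻¹ * A * diagonal v) i j = (v i)⁻¹ * A i j * v j := by
  simp [mul_diagonal, diagonal_mul]

lemma diagonal_inv_mul_mul_diagonal_nonneg {A : Matrix n n ℝ} (hA : ∀ i j, 0 ≤ A i j)
    {v : n → ℝ} (hv : ∀ i, 0 < v i) (i j : n) : 0 ≤ (diagonal v⁻¹ * A * diagonal v) i j := by
  rw [diagonal_inv_mul_mul_diagonal_apply]
  have := hv i; have := hv j; have := hA i j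
  positivity

lemma sum_diagonal_inv_mul_mul_diagonal_apply (A : Matrix n n ℝ) (v : n → ℝ) (i : n) :
    ∑ j, (diagonal v⁻¹ * A * diagonal v) i j = (v i)⁻¹ * (A *ᵥ v) i := by
  simp only [diagonal_inv_mul_mul_diagonal_apply, mul_assoc, ← Finset.mul_sum]
  rfl

lemma spectralRadius_map_ofReal_diagonal_inv_mul_mul_diagonal (A : Matrix n n ℝ) {v : n → ℝ}
    (hv : ∀ i, v i ≠ 0) :
    spectralRadius ℂ ((diagonal v⁻¹ * A * diagonal v).map ((↑) : ℝ → ℂ)) =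
      spectralRadius ℂ (A.map ((↑) : ℝ → ℂ)) := by
  have hmap : (diagonal v⁻¹ * A * diagonal v).map ((↑) : ℝ → ℂ) =
      diagonal (fun i => (v i : ℂ))⁻¹ * A.map (↑) * diagonal fun i => (v i : ℂ) := by
    ext i j
    simp
  rw [hmap, spectralRadius_diagonal_inv_mul_mul_diagonal (by exact_mod_cast hv)]

variable [Nonempty n]

theorem spectralRadius_map_ofReal_le_of_sum_le {B : Matrix n n ℝ} (hB : ∀ i j, 0 ≤ B i j)
    {R : ℝ} (hR : ∀ i, ∑ j, B i j ≤ R) :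
    spectralRadius ℂ (B.map ((↑) : ℝ → ℂ)) ≤ ENNReal.ofReal R := by
  refine (spectrum.spectralRadius_le_nnnorm _).trans (ENNReal.coe_le_coe.2 ?_)
  rw [linfty_opNNNorm_map_ofReal hB]
  exact Finset.sup_le fun i _ => Real.toNNReal_le_toNNReal (hR i)

theorem ofReal_le_spectralRadius_map_ofReal_of_le_sum {B : Matrix n n ℝ}
    (hB : ∀ i j, 0 ≤ B i j) {r : ℝ} (hr : ∀ i, r ≤ ∑ j, B i j) :
    ENNReal.ofReal r ≤ spectralRadius ℂ (B.map ((↑) : ℝ → ℂ)) := by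
  obtain hr₀ | hr₀ := le_total r 0
  · simp [ENNReal.ofReal_of_nonpos hr₀]
  have : CompleteSpace (Matrix n n ℂ) := FiniteDimensional.complete ℂ _
  obtain ⟨i⟩ := ‹Nonempty n›
  have hpow (k : ℕ) : (r.toNNReal : ℝ≥0∞) ^ k ≤ ‖B.map ((↑) : ℝ → ℂ) ^ k‖₊ := by
    have hmap : B.map ((↑) : ℝ → ℂ) ^ k = (B ^ k).map (↑) := (B.map_pow Complex.ofRealHom k).symm
    rw [← ENNReal.coe_pow, ENNReal.coe_le_coe, ← Real.toNNReal_pow hr₀, hmap,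
      linfty_opNNNorm_map_ofReal (pow_apply_nonneg hB k)]
    exact (Real.toNNReal_le_toNNReal (pow_le_sum_pow_apply hB hr₀ hr k i)).trans
      (Finset.le_sup (f := fun i => (∑ j, (B ^ k) i j).toNNReal) (Finset.mem_univ i))
  refine ge_of_tendsto (spectrum.pow_nnnorm_pow_one_div_tendsto_nhds_spectralRadius _)
    (Filter.eventually_atTop.2 ⟨1, fun k hk => ?_⟩)
  rw [one_div, ← ENNReal.pow_rpow_inv_natCast (by omega : k ≠ 0) (ENNReal.ofReal r)]
  exact ENNReal.rpow_le_rpow (hpow k) (by positivity)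

theorem spectralRadius_map_ofReal_le_of_mulVec_le {A : Matrix n n ℝ} (hA : ∀ i j, 0 ≤ A i j)
    {v : n → ℝ} (hv : ∀ i, 0 < v i) {R : ℝ} (hR : ∀ i, (A *ᵥ v) i ≤ R * v i) :
    spectralRadius ℂ (A.map ((↑) : ℝ → ℂ)) ≤ ENNReal.ofReal R := by
  rw [← spectralRadius_map_ofReal_diagonal_inv_mul_mul_diagonal A (hv · |>.ne')]
  refine spectralRadius_map_ofReal_le_of_sum_le (diagonal_inv_mul_mul_diagonal_nonneg hA hv)
    fun i => ?_
  rw [sum_diagonal_inv_mul_mul_diagonal_apply, inv_mul_le_iff₀ (hv i), mul_comm]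
  exact hR i

theorem ofReal_le_spectralRadius_map_ofReal_of_le_mulVec {A : Matrix n n ℝ}
    (hA : ∀ i j, 0 ≤ A i j) {v : n → ℝ} (hv : ∀ i, 0 < v i) {r : ℝ}
    (hr : ∀ i, r * v i ≤ (A *ᵥ v) i) :
    ENNReal.ofReal r ≤ spectralRadius ℂ (A.map ((↑) : ℝ → ℂ)) := by
  rw [← spectralRadius_map_ofReal_diagonal_inv_mul_mul_diagonal A (hv · |>.ne')]
  refine ofReal_le_spectralRadius_map_ofReal_of_le_sum
    (diagonal_inv_mul_mul_diagonal_nonneg hA hv) fun i => ?_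
  rw [sum_diagonal_inv_mul_mul_diagonal_apply, le_inv_mul_iff₀ (hv i), mul_comm]
  exact hr i

end Matrix

section NextGeneration

variable {n : Type*} [DecidableEq n]

/-- `c i` is the size of class `i` and `T` the total enrolment `∑ i, c i`. -/
noncomputable def nextGenMatrix (T p : ℝ) (c : n → ℝ) : Matrix n n ℝ :=
  of fun i j => if i = j then (c i - 1) * p else (2 * c j / (T - c i)) * (c j - 1) * p

variable {T p : ℝ} {c : n → ℝ}

lemma nextGenMatrix_nonneg (hp : 0 ≤ p) (hc : ∀ i, 1 ≤ c i) (hcT : ∀ i, c i < T) (i j : n) :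
    0 ≤ nextGenMatrix T p c i j := by
  have := hc i; have := hc j; have := hcT i
  rw [nextGenMatrix, of_apply]
  split_ifs
  · exact mul_nonneg (by linarith) hp
  · exact mul_nonneg (mul_nonneg (div_nonneg (by linarith) (by linarith)) (by linarith)) hp

lemma nextGenMatrix_mulVec_apply [Fintype n] (v : n → ℝ) (i : n) :
    (nextGenMatrix T p c *ᵥ v) i = p * ((c i - 1) * v i +
      2 / (T - c i) * (∑ j, c j * (c j - 1) * v j - c i * (c i - 1) * v i)) := by
  have hterm (j : n) : nextGenMatrix T p c i j * v j =
      2 * p / (T - c i) * (c j * (c j - 1) * v j) +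
        if i = j then p * ((c i - 1) * v i - 2 / (T - c i) * (c i * (c i - 1) * v i)) else 0 := by
    rw [nextGenMatrix, of_apply]
    split_ifs with h
    · subst h; ring
    · ring
  simp only [mulVec, dotProduct, hterm, Finset.sum_add_distrib, ← Finset.mul_sum,
    Finset.sum_ite_eq, Finset.mem_univ, if_true]
  ring

end NextGeneration

noncomputable def perronWeight (x : ℝ) : ℝ := 4 / ((7215 - x) * (505 - 2 * x) + 4 * x * (x - 1))

section PerronWeight

variable {x : ℝ}

lemma perronWeight_denom_pos (hx₁ : 1 ≤ x) (hx₂ : x ≤ 120) :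
    0 < (7215 - x) * (505 - 2 * x) + 4 * x * (x - 1) := by
  nlinarith

lemma perronWeight_pos (hx₁ : 1 ≤ x) (hx₂ : x ≤ 120) : 0 < perronWeight x :=
  div_pos four_pos (perronWeight_denom_pos hx₁ hx₂)

lemma perronWeight_row_eq (hx₁ : 1 ≤ x) (hx₂ : x ≤ 120) (S : ℝ) :
    (x - 1) * perronWeight x + 2 / (7215 - x) * (S - x * (x - 1) * perronWeight x) =
      503 / 2 * perronWeight x + 2 * (S - 1) / (7215 - x) := by
  have hw : perronWeight x * ((7215 - x) * (505 - 2 * x) + 4 * x * (x - 1)) = 4 :=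
    div_mul_cancel₀ 4 (perronWeight_denom_pos hx₁ hx₂).ne'
  have hT : 7215 - x ≠ 0 := by linarith
  generalize perronWeight x = w at hw ⊢
  field_simp
  linear_combination -hw

lemma perronWeight_row_mem_Icc (hx₁ : 1 ≤ x) (hx₂ : x ≤ 120) {S : ℝ}
    (hS : |S - 1| ≤ 1 / 1000) :
    (x - 1) * perronWeight x + 2 / (7215 - x) * (S - x * (x - 1) * perronWeight x) ∈
      Set.Icc (251 * perronWeight x) (252 * perronWeight x) := by
  have hE := perronWeight_denom_pos hx₁ hx₂
  have hT : 0 < 7215 - x := by linarith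
  have herr : |2 * (S - 1) / (7215 - x)| ≤ perronWeight x / 2 :=
    calc |2 * (S - 1) / (7215 - x)| = 2 * |S - 1| / (7215 - x) := by
          rw [abs_div, abs_mul, abs_two, abs_of_pos hT]
      _ ≤ 2 * (1 / 1000) / (7215 - x) := by gcongr
      _ ≤ 2 / ((7215 - x) * (505 - 2 * x) + 4 * x * (x - 1)) := by
          rw [div_le_div_iff₀ hT hE]
          nlinarith
      _ = perronWeight x / 2 := by rw [perronWeight]; ring
  rw [perronWeight_row_eq hx₁ hx₂, Set.mem_Icc]
  constructor <;> linarith [abs_le.1 herr]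

lemma abs_sum_perronWeight_sub_one_le :
    |∑ k ∈ Finset.range 111,
      ((k : ℝ) + 10) * ((k + 10) - 1) * perronWeight (k + 10) - 1| ≤ 1 / 1000 := by
  rw [abs_le]
  norm_num [Finset.sum_range_succ, perronWeight]

end PerronWeight

/-- For the `111×111` next-generation matrix of a university with one class of each size
`10, 11, …, 120` (total enrollment 7215), the spectral radius `ρ` satisfies
`251·p ≤ ρ ≤ 252·p`. -/
theorem online_cutoff_spectral_radius (p : ℝ) (hp : 0 < p)
    (c : Fin 111 → ℝ) (hc : ∀ i, c i = (i : ℕ) + 10)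
    (M : Matrix (Fin 111) (Fin 111) ℝ)
    (hM : ∀ i j, M i j =
      if i = j then (c i - 1) * p else (2 * c j / (7215 - c i)) * (c j - 1) * p) :
    ENNReal.ofReal (251 * p) ≤ spectralRadius ℂ (M.map (fun x : ℝ => (x : ℂ))) ∧
    spectralRadius ℂ (M.map (fun x : ℝ => (x : ℂ))) ≤ ENNReal.ofReal (252 * p) := by
  obtain rfl : M = nextGenMatrix 7215 p c := ext hM
  have hc_mem (i : Fin 111) : 1 ≤ c i ∧ c i ≤ 120 := by
    have : ((i : ℕ) : ℝ) ≤ 110 := by exact_mod_cast Nat.le_of_lt_succ i.isLt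
    rw [hc i]
    constructor <;> linarith [Nat.cast_nonneg (α := ℝ) i]
  set v : Fin 111 → ℝ := fun i => perronWeight (c i)
  have hv (i : Fin 111) : 0 < v i := perronWeight_pos (hc_mem i).1 (hc_mem i).2
  have hS : |∑ j, c j * (c j - 1) * v j - 1| ≤ 1 / 1000 := by
    simpa only [v, hc, Fin.sum_univ_eq_sum_range
      (fun k => ((k : ℝ) + 10) * ((k + 10) - 1) * perronWeight (k + 10))]
      using abs_sum_perronWeight_sub_one_le
  have hrow (i : Fin 111) := perronWeight_row_mem_Icc (hc_mem i).1 (hc_mem i).2 hS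
  have hM₀ : ∀ i j, 0 ≤ nextGenMatrix 7215 p c i j :=
    nextGenMatrix_nonneg hp.le (hc_mem · |>.1) fun i => by linarith [hc_mem i]
  constructor
  · refine ofReal_le_spectralRadius_map_ofReal_of_le_mulVec hM₀ hv fun i => ?_
    rw [nextGenMatrix_mulVec_apply]
    linarith [mul_le_mul_of_nonneg_left (hrow i).1 hp.le]
  · refine spectralRadius_map_ofReal_le_of_mulVec_le hM₀ hv fun i => ?_
    rw [nextGenMatrix_mulVec_apply]
    linarith [mul_le_mul_of_nonneg_left (hrow i).2 hp.le]
end
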